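/- The threshold ε* of the 11-qutrit Golay distillation map (the smallest positive fixed point of ε' (ε) = ε below which ε' < ε) corresponds to z* = z(ε*) satisfying the cubic equation 11z*³ + 12z*² + 3z* + 1 = 0, and ε* = (1/45)(−262·(2/(405√109−2981))^{1/3} + 2^{2/3}(405√109−2981)^{1/3} + 31) ≈ 0.387. -/
import Mathlib


/-- The simple weight enumerator `A(z)` of the 11-qutrit Golay code. -/
noncomputable def golayA : ℝ → ℝ := fun z =>
  1 + 528*z^6 + 7920*z^8 + 11000*z^9 + 23760*z^10 + 15840*z^11

/-- The simple weight enumerator `B(z)` of the dual of the 11-qutrit Golay code. -/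
noncomputable def golayB : ℝ → ℝ := fun z =>
  1 + 528*z^5 + 528*z^6 + 15840*z^7 + 40920*z^8 + 129800*z^9 + 198000*z^10 + 145824*z^11

/-- The change of variables `z(ε) = (3-ε)/(8ε-6)`. -/
noncomputable def zEps (ε : ℝ) : ℝ := (3 - ε) / (8 * ε - 6)

/-- The Golay distillation map `ε' = 3(3A(z(ε))+B(z(ε)))/(4B(z(ε)))`. -/
noncomputable def golayMap (ε : ℝ) : ℝ :=
  3 * (3 * golayA (zEps ε) + golayB (zEps ε)) / (4 * golayB (zEps ε))

/-- The Golay threshold `ε*` in closed form. -/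
noncomputable def epsStar : ℝ :=
  (1/45) * (-262 * (2 / (405 * Real.sqrt 109 - 2981)) ^ ((1 : ℝ)/3)
    + (2 : ℝ) ^ ((2 : ℝ)/3) * (405 * Real.sqrt 109 - 2981) ^ ((1 : ℝ)/3) + 31)

private lemma golayB_neg {z : ℝ} (h1 : -0.91 ≤ z) (h2 : z ≤ -0.49) : golayB z < 0 := by
  simp only [golayB]
  nlinarith [mul_nonneg (by linarith : (0:ℝ) ≤ z + 0.91) (by linarith : (0:ℝ) ≤ -0.49 - z),
    sq_nonneg (z^2), sq_nonneg (z^3), sq_nonneg (z^4), sq_nonneg (z^5),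
    mul_nonneg (mul_nonneg (by linarith : (0:ℝ) ≤ z + 0.91) (by linarith : (0:ℝ) ≤ -0.49 - z)) (sq_nonneg (z^2)),
    mul_nonneg (mul_nonneg (by linarith : (0:ℝ) ≤ z + 0.91) (by linarith : (0:ℝ) ≤ -0.49 - z)) (sq_nonneg (z^3)),
    mul_nonneg (mul_nonneg (by linarith : (0:ℝ) ≤ z + 0.91) (by linarith : (0:ℝ) ≤ -0.49 - z)) (sq_nonneg (z^4)),
    mul_nonneg (mul_nonneg (by linarith : (0:ℝ) ≤ z + 0.91) (by linarith : (0:ℝ) ≤ -0.49 - z)) (sq_nonneg (z^4+z^3)),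
    mul_nonneg (mul_nonneg (by linarith : (0:ℝ) ≤ z + 0.91) (by linarith : (0:ℝ) ≤ -0.49 - z)) (sq_nonneg (z^4+0.7*z^3))]

private lemma golayT_neg {z : ℝ} (h1 : -0.91 ≤ z) (h2 : z ≤ -0.49) :
    72 - 360*z + 504*z^2 + 1440*z^3 - 10008*z^4 + 14400*z^5 - 57888*z^6 + 51840*z^7 < 0 := by
  nlinarith [mul_nonneg (by linarith : (0:ℝ) ≤ z + 0.91) (by linarith : (0:ℝ) ≤ -0.49 - z),
    sq_nonneg (z+0.7), sq_nonneg z, sq_nonneg (z^2), sq_nonneg (z^3),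
    mul_nonneg (mul_nonneg (by linarith : (0:ℝ) ≤ z + 0.91) (by linarith : (0:ℝ) ≤ -0.49 - z)) (sq_nonneg z),
    mul_nonneg (mul_nonneg (by linarith : (0:ℝ) ≤ z + 0.91) (by linarith : (0:ℝ) ≤ -0.49 - z)) (sq_nonneg (z^2)),
    mul_nonneg (mul_nonneg (by linarith : (0:ℝ) ≤ z + 0.91) (by linarith : (0:ℝ) ≤ -0.49 - z)) (sq_nonneg (z+0.7))]

private lemma eps_lo {e : ℝ} (hP : 15*e^3 - 31*e^2 + 33*e - 9 = 0) : (0.3865:ℝ) < e := by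
  nlinarith [hP, sq_nonneg (e - 0.84), sq_nonneg e, sq_nonneg (e - 1)]

private lemma eps_hi {e : ℝ} (hP : 15*e^3 - 31*e^2 + 33*e - 9 = 0) : e < (0.3875:ℝ) := by
  nlinarith [hP, sq_nonneg (e - 0.84), sq_nonneg e, sq_nonneg (e - 1)]

private lemma quad_pos {z zs : ℝ} (h1 : -0.91 < zs) (h2 : zs < -0.89) (h3 : zs < z)
    (h4 : z < -(1:ℝ)/2) : 0 < 11*z^2 + (11*zs+12)*z + (11*zs^2+12*zs+3) := by
  nlinarith [sq_nonneg (z + 0.1), sq_nonneg (zs + 0.9), sq_nonneg (z + zs)]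

set_option maxHeartbeats 1000000 in
/-- `z* = z(ε*)` satisfies `11z³+12z²+3z+1 = 0`; `ε*` is a fixed point of the
Golay distillation map below which `ε' < ε`, and `ε* ≈ 0.387`. -/
theorem golay_threshold :
    11 * (zEps epsStar) ^ 3 + 12 * (zEps epsStar) ^ 2 + 3 * (zEps epsStar) + 1 = 0 ∧
    golayMap epsStar = epsStar ∧
    (∀ ε : ℝ, 0 < ε → ε < epsStar → golayMap ε < ε) ∧
    |epsStar - 0.387| < 0.001 := by
  set s : ℝ := Real.sqrt 109 with hsdef
  have hs : s^2 = 109 := Real.sq_sqrt (by norm_num)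
  have hs0 : 0 ≤ s := Real.sqrt_nonneg _
  have hs10 : 10 < s := by nlinarith [hs, hs0]
  have hX : (0:ℝ) < 405*s - 2981 := by linarith
  set c : ℝ := (405*s - 2981) ^ ((1:ℝ)/3) with hcdef
  have hcpos : 0 < c := Real.rpow_pos_of_pos hX _
  have hc3 : c^3 = 405*s - 2981 := by
    rw [hcdef, ← Real.rpow_natCast ((405*s - 2981) ^ ((1:ℝ)/3)) 3, ← Real.rpow_mul hX.le]
    norm_num
  set v : ℝ := (2:ℝ) ^ ((2:ℝ)/3) with hvdef
  have hvpos : 0 < v := Real.rpow_pos_of_pos two_pos _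
  have hv3 : v^3 = 4 := by
    rw [hvdef, ← Real.rpow_natCast ((2:ℝ) ^ ((2:ℝ)/3)) 3, ← Real.rpow_mul (by norm_num : (0:ℝ) ≤ 2)]
    norm_num
  set w : ℝ := v * c with hwdef
  have hwpos : 0 < w := mul_pos hvpos hcpos
  have hwne : w ≠ 0 := ne_of_gt hwpos
  have hw3 : w^3 = 1620*s - 11924 := by rw [hwdef, mul_pow, hv3, hc3]; ring
  have hu : (2 / (405*s - 2981)) ^ ((1:ℝ)/3) = 2 / w := by
    rw [Real.div_rpow (by norm_num) hX.le, ← hcdef]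
    have h13 : (2:ℝ)^((1:ℝ)/3) * v = 2 := by
      rw [hvdef, ← Real.rpow_add two_pos]
      norm_num
    rw [div_eq_div_iff (ne_of_gt hcpos) hwne]
    rw [hwdef]; linear_combination c * h13
  have hEps : epsStar = (w - 524/w + 31)/45 := by
    unfold epsStar
    rw [← hsdef, ← hcdef, ← hvdef, hu, ← hwdef]
    field_simp
    ring
  have h45 : 45 * epsStar * w = w^2 + 31*w - 524 := by
    rw [hEps]; field_simp; ring
  have hPw : (15*epsStar^3 - 31*epsStar^2 + 33*epsStar - 9) * (91125*w^3) = 0 := by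
    linear_combination ((4118640:ℝ) + 243660*w + 22275*w^2 - 465*w^3 + 15*w^4
        - 353700*epsStar*w - 41850*epsStar*w^2 + 675*epsStar*w^3 + 30375*epsStar^2*w^2) * h45
      + (15*w^3 + 24300*s + 178860) * hw3 + 39366000 * hs
  have hP : 15*epsStar^3 - 31*epsStar^2 + 33*epsStar - 9 = 0 := by
    have h91 : (91125*w^3) ≠ 0 := by positivity
    exact (mul_eq_zero.mp hPw).resolve_right h91
  have heps_lo : (0.3865:ℝ) < epsStar := eps_lo hP
  have heps_hi : epsStar < (0.3875:ℝ) := eps_hi hP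
  have h6 : 8*epsStar - 6 < 0 := by linarith
  have h6ne : (8*epsStar - 6) ≠ 0 := ne_of_lt h6
  set zs : ℝ := zEps epsStar with hzsdef
  have hzs : zs * (8*epsStar - 6) = 3 - epsStar := by
    rw [hzsdef]; unfold zEps; exact div_mul_cancel₀ _ h6ne
  have hzs_lo : -0.91 < zs := by
    rw [hzsdef]; unfold zEps
    rw [lt_div_iff_of_neg h6]
    linarith
  have hzs_hi : zs < -0.89 := by
    rw [hzsdef]; unfold zEps
    rw [div_lt_iff_of_neg h6]
    linarith
  have hcub : 11*zs^3 + 12*zs^2 + 3*zs + 1 = 0 := by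
    have key : (11*zs^3 + 12*zs^2 + 3*zs + 1) * (8*epsStar - 6)^3 = 0 := by
      linear_combination ((704*epsStar^2 - 1056*epsStar + 396)*zs^2
        + (680*epsStar^2 - 822*epsStar + 234)*zs + (107*epsStar^2 + 6*epsStar - 9)) * hzs + 27*hP
    exact (mul_eq_zero.mp key).resolve_right (pow_ne_zero 3 h6ne)
  have hBzs : golayB zs < 0 := golayB_neg (by linarith) (by linarith)
  have hBne : golayB zs ≠ 0 := ne_of_lt hBzs
  have h8z : 8*zs + 1 < 0 := by linarith
  have h8zne : (8*zs + 1) ≠ 0 := ne_of_lt h8z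
  have hde : epsStar * (8*zs + 1) = 6*zs + 3 := by linear_combination hzs
  have hQ : 3*(3*golayA zs + golayB zs)*(8*zs+1) - 4*(6*zs+3)*golayB zs
      = (11*zs^3+12*zs^2+3*zs+1) * ((2*zs+1)*(zs*(72 - 360*zs + 504*zs^2 + 1440*zs^3
        - 10008*zs^4 + 14400*zs^5 - 57888*zs^6 + 51840*zs^7))) := by
    simp only [golayA, golayB]; ring
  have hfix : 3*(3*golayA zs + golayB zs) = epsStar * (4*golayB zs) := by
    have h0 : 3*(3*golayA zs + golayB zs)*(8*zs+1) = epsStar*(4*golayB zs)*(8*zs+1) := by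
      linear_combination hQ + ((2*zs+1)*(zs*(72 - 360*zs + 504*zs^2 + 1440*zs^3
        - 10008*zs^4 + 14400*zs^5 - 57888*zs^6 + 51840*zs^7))) * hcub - 4*golayB zs * hde
    exact mul_right_cancel₀ h8zne h0
  have hfix2 : golayMap epsStar = epsStar := by
    unfold golayMap
    rw [← hzsdef, div_eq_iff (mul_ne_zero (by norm_num) hBne)]
    linear_combination hfix
  refine ⟨hcub, hfix2, ?_, ?_⟩
  · intro ε hε0 hεlt
    have h6' : 8*ε - 6 < 0 := by linarith
    have h6'ne : (8*ε - 6) ≠ 0 := ne_of_lt h6'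
    set z : ℝ := zEps ε with hzdef
    have hz : z * (8*ε - 6) = 3 - ε := by
      rw [hzdef]; unfold zEps; exact div_mul_cancel₀ _ h6'ne
    have hzlt : z < -(1:ℝ)/2 := by
      rw [hzdef]; unfold zEps
      rw [div_lt_iff_of_neg h6']
      linarith
    have hzgt : zs < z := by
      have key : (z - zs) * ((8*ε-6)*(8*epsStar-6)) = 18*(epsStar - ε) := by
        linear_combination (8*epsStar-6)*hz - (8*ε-6)*hzs
      by_contra hcon
      push_neg at hcon
      have hp : 0 < (8*ε-6)*(8*epsStar-6) := mul_pos_of_neg_of_neg h6' h6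
      have hnp : (z - zs) * ((8*ε-6)*(8*epsStar-6)) ≤ 0 :=
        mul_nonpos_of_nonpos_of_nonneg (by linarith) hp.le
      linarith [key, hnp]
    have hz_lo : (-0.91:ℝ) ≤ z := by linarith
    have hz_hi : z ≤ (-0.49:ℝ) := by linarith
    have hB : golayB z < 0 := golayB_neg hz_lo hz_hi
    have hT : 72 - 360*z + 504*z^2 + 1440*z^3 - 10008*z^4 + 14400*z^5 - 57888*z^6 + 51840*z^7 < 0 :=
      golayT_neg hz_lo hz_hi
    have hq : 0 < 11*z^2 + (11*zs+12)*z + (11*zs^2+12*zs+3) :=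
      quad_pos hzs_lo hzs_hi hzgt hzlt
    have hcubz : 0 < 11*z^3 + 12*z^2 + 3*z + 1 := by
      have hfac : 11*z^3 + 12*z^2 + 3*z + 1
          = (z - zs)*(11*z^2 + (11*zs+12)*z + (11*zs^2+12*zs+3)) := by
        linear_combination hcub
      rw [hfac]; exact mul_pos (by linarith) hq
    have hR : (2*z+1)*(z*(72 - 360*z + 504*z^2 + 1440*z^3 - 10008*z^4 + 14400*z^5
        - 57888*z^6 + 51840*z^7)) < 0 := by
      have h1 : 0 < z*(72 - 360*z + 504*z^2 + 1440*z^3 - 10008*z^4 + 14400*z^5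
          - 57888*z^6 + 51840*z^7) := mul_pos_of_neg_of_neg (by linarith) hT
      exact mul_neg_of_neg_of_pos (by linarith) h1
    have hQz : 3*(3*golayA z + golayB z)*(8*z+1) - 4*(6*z+3)*golayB z < 0 := by
      have hident : 3*(3*golayA z + golayB z)*(8*z+1) - 4*(6*z+3)*golayB z
          = (11*z^3+12*z^2+3*z+1) * ((2*z+1)*(z*(72 - 360*z + 504*z^2 + 1440*z^3
            - 10008*z^4 + 14400*z^5 - 57888*z^6 + 51840*z^7))) := by
        simp only [golayA, golayB]; ring
      rw [hident]; exact mul_neg_of_pos_of_neg hcubz hR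
    have hde' : ε*(8*z+1) = 6*z+3 := by linear_combination hz
    have h8' : 8*z + 1 < 0 := by linarith
    have hN : 0 < 3*(3*golayA z + golayB z) - 4*ε*golayB z := by
      have hNQ : (3*(3*golayA z + golayB z) - 4*ε*golayB z)*(8*z+1)
          = 3*(3*golayA z + golayB z)*(8*z+1) - 4*(6*z+3)*golayB z := by
        linear_combination (-4*golayB z) * hde'
      by_contra hcon
      push_neg at hcon
      have : 0 ≤ (3*(3*golayA z + golayB z) - 4*ε*golayB z)*(8*z+1) :=
        mul_nonneg_of_nonpos_of_nonpos hcon h8'.le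
      linarith
    unfold golayMap
    rw [← hzdef, div_lt_iff_of_neg (by linarith : 4*golayB z < 0)]
    linarith [hN]
  · rw [abs_lt]
    constructor <;> [linarith; linarith]
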